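/- arXiv:1903.05497 — 2 statements merged into one kernel-verified Lean document; each statement's English description precedes it below -/
import Mathlib

section
/- Given moments (E_0, E_1, E_2) in the realizable region Ω = {E_0 > 0, E_2 < E_0, E_1² < E_0 E_2}, the parameters w = E_0, γ = (E_1/E_0 + 1)/2, δ = ((E_1/E_0)² - E_2/E_0)/(E_2/E_0 - 1) satisfy w > 0, 0 < γ < 1, and δ > 0. -/
theorem B2_parameters_admissible
    (E0 E1 E2 : ℝ) (h0 : 0 < E0) (h2 : E2 < E0) (h12 : E1 ^ 2 < E0 * E2)
    (w γ δ : ℝ)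
    (hw : w = E0)
    (hγ : γ = (E1 / E0 + 1) / 2)
    (hδ : δ = ((E1 / E0) ^ 2 - E2 / E0) / (E2 / E0 - 1)) :
    0 < w ∧ 0 < γ ∧ γ < 1 ∧ 0 < δ := by
  have h0' : E0 ≠ 0 := ne_of_gt h0
  have hE1 : E1 ^ 2 < E0 ^ 2 := by nlinarith [sq_nonneg E1]
  have habs : |E1| < E0 := by
    exact abs_lt_of_sq_lt_sq (by nlinarith) h0.le
  have h1a : -E0 < E1 := (abs_lt.mp habs).1
  have h1b : E1 < E0 := (abs_lt.mp habs).2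
  refine ⟨hw ▸ h0, ?_, ?_, ?_⟩
  · rw [hγ]
    have : -1 < E1 / E0 := by
      rw [lt_div_iff₀ h0]; linarith
    linarith
  · rw [hγ]
    have : E1 / E0 < 1 := by
      rw [div_lt_iff₀ h0]; linarith
    linarith
  · rw [hδ]
    apply div_pos_of_neg_of_neg
    · have : (E1 / E0) ^ 2 = E1 ^ 2 / E0 ^ 2 := by ring
      rw [this, sub_neg, div_lt_div_iff₀ (by positivity) h0]
      nlinarith
    · rw [sub_neg, div_lt_one h0]; exact h2
end

section
/- Suppose states (E_0^L,E_1^L,E_2^L,E_3^L) and (E_0^R,E_1^R,E_2^R,E_3^R) with E_0^L ≠ E_0^R satisfy the Rankine–Hugoniot conditions E_1^R − E_1^L = s(E_0^R − E_0^L), E_2^R − E_2^L = s(E_1^R − E_1^L), E_3^R − E_3^L = s(E_2^R − E_2^L) for some s ∈ ℝ. Then, with u = E_1/E_0 and p = E_2 − E_1²/E_0 (both E_0^L, E_0^R > 0), one has (E_0^R − E_0^L)(p^R − p^L) = (E_0^R E_1^L − E_0^L E_1^R)²/(E_0^L E_0^R) ≥ 0. -/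
theorem RH_jump_p
    (E0L E1L E2L E3L E0R E1R E2R E3R s : ℝ)
    (h0L : 0 < E0L) (h0R : 0 < E0R) (hne : E0L ≠ E0R)
    (h1 : E1R - E1L = s * (E0R - E0L))
    (h2 : E2R - E2L = s * (E1R - E1L))
    (h3 : E3R - E3L = s * (E2R - E2L))
    (uL uR pL pR : ℝ)
    (huL : uL = E1L / E0L) (huR : uR = E1R / E0R)
    (hpL : pL = E2L - E1L ^ 2 / E0L) (hpR : pR = E2R - E1R ^ 2 / E0R) :
    (E0R - E0L) * (pR - pL) = (E0R * E1L - E0L * E1R) ^ 2 / (E0L * E0R) ∧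
    0 ≤ (E0R - E0L) * (pR - pL) := by
  have key : (E0R - E0L) * (pR - pL) = (E0R * E1L - E0L * E1R) ^ 2 / (E0L * E0R) := by
    have e1 : E1R = E1L + s * (E0R - E0L) := by linarith
    have e2 : E2R = E2L + s * (E1R - E1L) := by linarith
    subst hpL hpR e2 e1
    field_simp
    ring
  exact ⟨key, key ▸ div_nonneg (sq_nonneg _) (by positivity)⟩
end
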